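/- Let f : Finset V → ℝ be monotone, submodular, and satisfy f(∅) = 0, where V is a finite type. Let S* be a set of size k maximizing f among sets of size k, and let S_g be obtained by the greedy procedure that starts from ∅ and for k steps adds an element of maximum marginal gain. Then f(S_g) ≥ (1 − (1 − 1/k)^k) · f(S*) ≥ (1 − 1/e) · f(S*). -/

import Mathlib

/-!
By submodularity, the gap `f S* - f T` is at most the sum of the marginal gains over `T` of the
at most `k` elements of `S* \ T`, and the greedy element gains at least as much as each of them.
So every greedy step closes at least a `1/k` fraction of the gap, the gap after `k` steps is at
most `(1 - 1/k)^k f S*`, and `(1 - 1/k)^k ≤ e⁻¹`.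
-/

open Finset

section Greedy

variable {V : Type*} [DecidableEq V] {f : Finset V → ℝ}

theorem sub_le_sum_marginal_gain
    (hsub : ∀ S T : Finset V, S ⊆ T → ∀ v : V, v ∉ T →
      f (insert v T) - f T ≤ f (insert v S) - f S) (A B : Finset V) :
    f (A ∪ B) - f B ≤ ∑ v ∈ A \ B, (f (insert v B) - f B) := by
  induction A using Finset.induction_on with
  | empty => simp
  | @insert a A ha ih =>
    by_cases haB : a ∈ B
    · rwa [insert_union, insert_eq_of_mem (mem_union_right A haB), insert_sdiff_of_mem _ haB]
    · have haAB : a ∉ A ∪ B := by simp [ha, haB]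
      rw [insert_union, insert_sdiff_of_notMem _ haB,
        sum_insert fun h => ha (mem_sdiff.1 h).1]
      linarith [hsub B (A ∪ B) subset_union_right a haAB]

theorem sub_le_card_mul_max_marginal_gain (hmono : ∀ S T : Finset V, S ⊆ T → f S ≤ f T)
    (hsub : ∀ S T : Finset V, S ⊆ T → ∀ v : V, v ∉ T →
      f (insert v T) - f T ≤ f (insert v S) - f S)
    {k : ℕ} {S : Finset V} (hS : #S ≤ k) (T : Finset V) {v : V}
    (hv : ∀ u : V, f (insert u T) - f T ≤ f (insert v T) - f T) :
    f S - f T ≤ k * (f (insert v T) - f T) := by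
  have hgain : 0 ≤ f (insert v T) - f T := sub_nonneg.2 (hmono _ _ (subset_insert v T))
  have hcard : (#(S \ T) : ℝ) ≤ k := by exact_mod_cast (card_le_card sdiff_subset).trans hS
  calc f S - f T ≤ f (S ∪ T) - f T := by linarith [hmono S (S ∪ T) subset_union_left]
    _ ≤ ∑ u ∈ S \ T, (f (insert u T) - f T) := sub_le_sum_marginal_gain hsub S T
    _ ≤ ∑ _u ∈ S \ T, (f (insert v T) - f T) := sum_le_sum fun u _ => hv u
    _ = #(S \ T) * (f (insert v T) - f T) := by rw [sum_const, nsmul_eq_mul]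
    _ ≤ k * (f (insert v T) - f T) := mul_le_mul_of_nonneg_right hcard hgain

theorem sub_greedy_step_le (hmono : ∀ S T : Finset V, S ⊆ T → f S ≤ f T)
    (hsub : ∀ S T : Finset V, S ⊆ T → ∀ v : V, v ∉ T →
      f (insert v T) - f T ≤ f (insert v S) - f S)
    {k : ℕ} (hk : 0 < k) {S : Finset V} (hS : #S ≤ k) (T : Finset V) {v : V}
    (hv : ∀ u : V, f (insert u T) - f T ≤ f (insert v T) - f T) :
    f S - f (insert v T) ≤ (1 - 1 / (k : ℝ)) * (f S - f T) := by
  have hkR : (0 : ℝ) < k := by exact_mod_cast hk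
  have hgap := sub_le_card_mul_max_marginal_gain hmono hsub hS T hv
  have hfrac : (f S - f T) / k ≤ f (insert v T) - f T := by
    rw [div_le_iff₀ hkR]; linarith
  calc f S - f (insert v T) ≤ (f S - f T) - (f S - f T) / k := by linarith
    _ = (1 - 1 / (k : ℝ)) * (f S - f T) := by field_simp

theorem sub_greedy_le_pow_mul (hmono : ∀ S T : Finset V, S ⊆ T → f S ≤ f T)
    (hsub : ∀ S T : Finset V, S ⊆ T → ∀ v : V, v ∉ T →
      f (insert v T) - f T ≤ f (insert v S) - f S)
    {k : ℕ} (hk : 0 < k) {S : Finset V} (hS : #S ≤ k) {T : ℕ → Finset V}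
    (hgreedy : ∀ t, t < k → ∃ v : V, T (t + 1) = insert v (T t) ∧
      ∀ u : V, f (insert u (T t)) - f (T t) ≤ f (insert v (T t)) - f (T t)) :
    ∀ t, t ≤ k → f S - f (T t) ≤ (1 - 1 / (k : ℝ)) ^ t * (f S - f (T 0)) := by
  have hratio : (0 : ℝ) ≤ 1 - 1 / k := by
    rw [sub_nonneg, div_le_one₀ (by exact_mod_cast hk)]
    exact_mod_cast hk
  intro t ht
  induction t with
  | zero => simp
  | succ t ih =>
    obtain ⟨v, hT, hv⟩ := hgreedy t ht
    calc f S - f (T (t + 1)) ≤ (1 - 1 / (k : ℝ)) * (f S - f (T t)) :=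
          hT ▸ sub_greedy_step_le hmono hsub hk hS (T t) hv
      _ ≤ (1 - 1 / (k : ℝ)) * ((1 - 1 / (k : ℝ)) ^ t * (f S - f (T 0))) :=
          mul_le_mul_of_nonneg_left (ih (Nat.le_of_succ_le ht)) hratio
      _ = (1 - 1 / (k : ℝ)) ^ (t + 1) * (f S - f (T 0)) := by ring

end Greedy

theorem stmt_10_general {V : Type*} [DecidableEq V] (f : Finset V → ℝ)
    (hmono : ∀ S T : Finset V, S ⊆ T → f S ≤ f T)
    (hsub : ∀ S T : Finset V, S ⊆ T → ∀ v : V, v ∉ T →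
      f (insert v T) - f T ≤ f (insert v S) - f S)
    (hempty : f ∅ = 0)
    (k : ℕ)
    (Sopt : Finset V) (hopt_card : Sopt.card = k)
    (T : ℕ → Finset V) (hT0 : T 0 = ∅)
    (hgreedy : ∀ t, t < k → ∃ v : V, v ∉ T t ∧ T (t + 1) = insert v (T t) ∧
      ∀ u : V, f (insert u (T t)) - f (T t) ≤ f (insert v (T t)) - f (T t)) :
    f (T k) ≥ (1 - (1 - 1 / (k : ℝ)) ^ k) * f Sopt ∧
      (1 - (1 - 1 / (k : ℝ)) ^ k) * f Sopt ≥ (1 - 1 / Real.exp 1) * f Sopt := by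
  have hopt_nonneg : 0 ≤ f Sopt := hempty ▸ hmono ∅ Sopt (empty_subset _)
  rcases Nat.eq_zero_or_pos k with rfl | hk
  · simp [card_eq_zero.1 hopt_card, hT0, hempty]
  have hgap := sub_greedy_le_pow_mul hmono hsub hk hopt_card.le
    (fun t ht => (hgreedy t ht).imp fun _ h => h.2) k le_rfl
  rw [hT0, hempty, sub_zero] at hgap
  refine ⟨by linarith, mul_le_mul_of_nonneg_right ?_ hopt_nonneg⟩
  have hexp := Real.one_sub_div_pow_le_exp_neg (n := k) (t := 1) (by exact_mod_cast hk)
  rw [Real.exp_neg, ← one_div] at hexp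
  linarith

theorem stmt_10 {V : Type*} [Fintype V] [DecidableEq V] (f : Finset V → ℝ)
    (hmono : ∀ S T : Finset V, S ⊆ T → f S ≤ f T)
    (hsub : ∀ S T : Finset V, S ⊆ T → ∀ v : V, v ∉ T →
      f (insert v T) - f T ≤ f (insert v S) - f S)
    (hempty : f ∅ = 0)
    (k : ℕ)
    (Sopt : Finset V) (hopt_card : Sopt.card = k)
    (hopt : ∀ S : Finset V, S.card = k → f S ≤ f Sopt)
    (T : ℕ → Finset V) (hT0 : T 0 = ∅)
    (hgreedy : ∀ t, t < k → ∃ v : V, v ∉ T t ∧ T (t + 1) = insert v (T t) ∧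
      ∀ u : V, f (insert u (T t)) - f (T t) ≤ f (insert v (T t)) - f (T t)) :
    f (T k) ≥ (1 - (1 - 1 / (k : ℝ)) ^ k) * f Sopt ∧
      (1 - (1 - 1 / (k : ℝ)) ^ k) * f Sopt ≥ (1 - 1 / Real.exp 1) * f Sopt :=
  stmt_10_general f hmono hsub hempty k Sopt hopt_card T hT0 hgreedy
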